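/- arXiv:2505.04872 — 2 statements merged into one kernel-verified Lean document; each statement's English description precedes it below -/
import Mathlib

section
/- Let R be a commutative noetherian local ring, and let M and N be finitely generated R-modules. If N belongs to the extension closure of M in mod R, then the first syzygy Ω N belongs to the extension closure of Ω M in mod R. -/
open CategoryTheory

universe u

section Defs

variable (R : Type u) [CommRing R]

/-- `N` is a direct summand of `M`. -/
def IsSummand (N M : ModuleCat.{u} R) : Prop :=
  ∃ (s : N →ₗ[R] M) (r : M →ₗ[R] N), r ∘ₗ s = LinearMap.id

/-- The finite direct sum of a finite family of modules. -/
def finSum {n : ℕ} (f : Fin n → ModuleCat.{u} R) : ModuleCat.{u} R :=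
  ModuleCat.of R (∀ i, f i)

/-- The additive closure `add X` of a class `X` of modules: all direct summands of
finite direct sums of modules in `X`. -/
def addClosure (X : Set (ModuleCat.{u} R)) : Set (ModuleCat.{u} R) :=
  {M | ∃ (n : ℕ) (f : Fin n → ModuleCat.{u} R),
    (∀ i, f i ∈ X) ∧ IsSummand R M (finSum R f)}

/-- A class of modules is extension closed if it is closed under direct summands and
under extensions. -/
def IsExtClosed (S : Set (ModuleCat.{u} R)) : Prop :=
  (∀ M N : ModuleCat.{u} R, M ∈ S → IsSummand R N M → N ∈ S) ∧
  (∀ (A B C : ModuleCat.{u} R) (f : A →ₗ[R] B) (g : B →ₗ[R] C),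
    Function.Injective f → Function.Exact f g → Function.Surjective g →
    A ∈ S → C ∈ S → B ∈ S)

/-- The extension closure `ext X`: the smallest class containing `X` that is closed
under direct summands and extensions. -/
def extClosure (X : Set (ModuleCat.{u} R)) : Set (ModuleCat.{u} R) :=
  ⋂₀ {S | X ⊆ S ∧ IsExtClosed R S}

end Defs
/-- A finitely generated module over a noetherian local ring is maximal Cohen–Macaulay
if it admits a regular sequence in the maximal ideal of length the Krull dimension of `R`. -/
def IsMCM (R : Type u) [CommRing R] [IsLocalRing R]
    (M : Type u) [AddCommGroup M] [Module R M] : Prop :=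
  ∃ rs : List R, (∀ r ∈ rs, r ∈ IsLocalRing.maximalIdeal R) ∧
    RingTheory.Sequence.IsRegular M rs ∧ (rs.length : WithBot ℕ∞) = ringKrullDim R

/-- `M` is rigid: `Ext¹_R(M, M) = 0`. -/
def RigidModule (R : Type u) [CommRing R] (M : ModuleCat.{u} R) : Prop :=
  Subsingleton (((Ext R (ModuleCat.{u} R) 1).obj (Opposite.op M)).obj M)

/-- A noetherian local ring is Gorenstein if it has finite self-injective dimension,
i.e. `Ext^i(-, R)` vanishes for all sufficiently large `i`. -/
def IsGorensteinLocalRing (R : Type u) [CommRing R] [IsLocalRing R] : Prop :=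
  ∃ n : ℕ, ∀ i : ℕ, n < i → ∀ M : ModuleCat.{u} R,
    Subsingleton (((Ext R (ModuleCat.{u} R) i).obj (Opposite.op M)).obj (ModuleCat.of R R))

/-- `N` is (isomorphic to) the first syzygy `Ω M`: there is an exact sequence
`0 → N → F → M → 0` with `F` finite free and `N → F` landing in `m F` (minimality). -/
def IsSyzygyOf (R : Type u) [CommRing R] [IsLocalRing R] (N M : ModuleCat.{u} R) : Prop :=
  ∃ (F : ModuleCat.{u} R) (i : N →ₗ[R] F) (p : F →ₗ[R] M),
    Module.Free R F ∧ Module.Finite R F ∧ Function.Injective i ∧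
    Function.Exact i p ∧ Function.Surjective p ∧
    LinearMap.range i ≤ (IsLocalRing.maximalIdeal R) • (⊤ : Submodule R F)

/-!
If `K` is a direct summand of `L`, a minimal syzygy of `K` is a direct summand of every syzygy
of `L`: lifting `K → L → K` along a minimal free cover `F → K` and a free cover of `L` gives an
endomorphism of `F` over `K`; it is the identity modulo `𝔪F`, hence an automorphism by Nakayama,
and the automorphism it induces on `Ω K` factors through the syzygy of `L`. Consequently the
finitely generated modules all of whose syzygies lie in `ext(Ω M)` are closed under direct
summands and, by the horseshoe construction, under extensions; they include `M`, hence `N`.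
-/

theorem Function.Exact.exists_lift {R X F L Y : Type*} [CommRing R]
    [AddCommGroup X] [Module R X] [AddCommGroup F] [Module R F] [AddCommGroup L] [Module R L]
    [AddCommGroup Y] [Module R Y] {i : X →ₗ[R] F} {p : F →ₗ[R] L}
    (hip : Function.Exact i p) (hi : Function.Injective i) (φ : Y →ₗ[R] F) (hφ : p ∘ₗ φ = 0) :
    ∃ ψ : Y →ₗ[R] X, i ∘ₗ ψ = φ := by
  have hmem (y : Y) : φ y ∈ LinearMap.range i := by
    rw [← hip.linearMap_ker_eq, LinearMap.mem_ker, ← LinearMap.comp_apply, hφ,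
      LinearMap.zero_apply]
  refine ⟨(LinearEquiv.ofInjective i hi).symm.toLinearMap ∘ₗ
    LinearMap.codRestrict (LinearMap.range i) φ hmem, ?_⟩
  ext y
  exact LinearEquiv.ofInjective_symm_apply (f := i) (h := hi) ⟨φ y, hmem y⟩

theorem Function.Exact.bijective_of_comp_eq_comp {R X F L : Type*} [CommRing R]
    [AddCommGroup X] [Module R X] [AddCommGroup F] [Module R F] [AddCommGroup L] [Module R L]
    {i : X →ₗ[R] F} {p : F →ₗ[R] L} (hip : Function.Exact i p) (hi : Function.Injective i)
    {ψ : F →ₗ[R] F} (hψ : Function.Bijective ψ) (hpψ : p ∘ₗ ψ = p)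
    {θ : X →ₗ[R] X} (hθ : i ∘ₗ θ = ψ ∘ₗ i) : Function.Bijective θ := by
  have hθ' (x : X) : i (θ x) = ψ (i x) := congr($hθ x)
  refine ⟨fun x y hxy => hi (hψ.injective ?_), fun x => ?_⟩
  · rw [← hθ', ← hθ', hxy]
  · obtain ⟨y, hy⟩ := hψ.surjective (i x)
    obtain ⟨z, rfl⟩ : y ∈ LinearMap.range i := by
      rw [← hip.linearMap_ker_eq, LinearMap.mem_ker, ← congr($hpψ y), LinearMap.comp_apply, hy,
        hip.apply_apply_eq_zero]
    exact ⟨z, hi (by rw [hθ', hy])⟩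

theorem IsLocalRing.bijective_of_forall_sub_mem_maximalIdeal_smul_top {R F : Type*} [CommRing R]
    [IsLocalRing R] [AddCommGroup F] [Module R F] [Module.Finite R F] (ψ : F →ₗ[R] F)
    (hψ : ∀ x, ψ x - x ∈ IsLocalRing.maximalIdeal R • (⊤ : Submodule R F)) :
    Function.Bijective ψ := by
  refine OrzechProperty.bijective_of_surjective_endomorphism ψ ?_
  rw [← LinearMap.range_eq_top, ← IsLocalRing.map_mkQ_eq_top, ← LinearMap.range_comp,
    LinearMap.range_eq_top]
  intro x
  obtain ⟨x, rfl⟩ := Submodule.mkQ_surjective _ x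
  exact ⟨x, (Submodule.Quotient.eq _).2 (hψ x)⟩

open TensorProduct in
theorem IsLocalRing.ker_linearCombination_le_maximalIdeal_smul_top {R M ι : Type*} [CommRing R]
    [IsLocalRing R] [AddCommGroup M] [Module R M] [Fintype ι] {v : ι → M}
    (hv : LinearIndependent (IsLocalRing.ResidueField R)
      fun i => (1 : IsLocalRing.ResidueField R) ⊗ₜ[R] v i) :
    LinearMap.ker (Fintype.linearCombination R v) ≤
      IsLocalRing.maximalIdeal R • (⊤ : Submodule R (ι → R)) := by
  classical
  intro a ha
  have hres (i : ι) : a i ∈ IsLocalRing.maximalIdeal R := by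
    rw [← IsLocalRing.residue_eq_zero_iff]
    refine Fintype.linearIndependent_iff.1 hv (fun i => IsLocalRing.residue R (a i)) ?_ i
    have := congr_arg (TensorProduct.mk R (IsLocalRing.ResidueField R) M 1) ha
    simpa [Fintype.linearCombination_apply, ← IsLocalRing.ResidueField.algebraMap_eq,
      algebraMap_smul] using this
  rw [pi_eq_sum_univ a]
  exact Submodule.sum_mem _ fun i _ => Submodule.smul_mem_smul (hres i) trivial

section

variable {R : Type u} [CommRing R]

theorem IsSummand.refl (M : ModuleCat.{u} R) : IsSummand R M M :=
  ⟨LinearMap.id, LinearMap.id, rfl⟩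

theorem subset_extClosure (X : Set (ModuleCat.{u} R)) : X ⊆ extClosure R X :=
  fun _ hM => Set.mem_sInter.2 fun _ hS => hS.1 hM

theorem isExtClosed_extClosure (X : Set (ModuleCat.{u} R)) : IsExtClosed R (extClosure R X) :=
  ⟨fun M N hM hNM => Set.mem_sInter.2 fun S hS => hS.2.1 M N (Set.mem_sInter.1 hM S hS) hNM,
    fun A B C f g hf hfg hg hA hC => Set.mem_sInter.2 fun S hS =>
      hS.2.2 A B C f g hf hfg hg (Set.mem_sInter.1 hA S hS) (Set.mem_sInter.1 hC S hS)⟩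

theorem extClosure_subset {X S : Set (ModuleCat.{u} R)} (hXS : X ⊆ S) (hS : IsExtClosed R S) :
    extClosure R X ⊆ S :=
  Set.sInter_subset_of_mem ⟨hXS, hS⟩

variable (R) in
def IsFreeCoverKernel (X L : ModuleCat.{u} R) : Prop :=
  ∃ (F : ModuleCat.{u} R) (i : X →ₗ[R] F) (p : F →ₗ[R] L),
    Module.Free R F ∧ Function.Injective i ∧ Function.Exact i p ∧ Function.Surjective p

theorem IsFreeCoverKernel.horseshoe {A B C ΩA ΩC : ModuleCat.{u} R} {f : A →ₗ[R] B}
    {g : B →ₗ[R] C} (hf : Function.Injective f) (hfg : Function.Exact f g)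
    (hg : Function.Surjective g) (hA : IsFreeCoverKernel R ΩA A)
    (hC : IsFreeCoverKernel R ΩC C) :
    ∃ (X : ModuleCat.{u} R) (j : ΩA →ₗ[R] X) (q : X →ₗ[R] ΩC), IsFreeCoverKernel R X B ∧
      Function.Injective j ∧ Function.Exact j q ∧ Function.Surjective q := by
  obtain ⟨FA, iA, pA, hFA, hiA, hexA, hpA⟩ := hA
  obtain ⟨FC, iC, pC, hFC, hiC, hexC, hpC⟩ := hC
  obtain ⟨l, hl⟩ := Module.projective_lifting_property g pC hg
  have hl' (y : FC) : g (l y) = pC y := congr($hl y)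
  let P := LinearMap.coprod (f ∘ₗ pA) l
  have hP (z : FA × FC) : P z = f (pA z.1) + l z.2 := rfl
  have hgP (z : FA × FC) : g (P z) = pC z.2 := by
    rw [hP, map_add, hfg.apply_apply_eq_zero, zero_add, hl']
  have hPsurj : Function.Surjective P := by
    intro b
    obtain ⟨y, hy⟩ := hpC (g b)
    obtain ⟨a, ha⟩ : b - l y ∈ LinearMap.range f := by
      rw [← hfg.linearMap_ker_eq, LinearMap.mem_ker, map_sub, hl', hy, sub_self]
    obtain ⟨x, rfl⟩ := hpA a
    exact ⟨(x, y), by rw [hP, ha, sub_add_cancel]⟩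
  let j : ΩA →ₗ[R] LinearMap.ker P := LinearMap.codRestrict _ (LinearMap.inl R FA FC ∘ₗ iA)
    fun w => by simp [hP, hexA.apply_apply_eq_zero]
  obtain ⟨q, hq⟩ :=
      hexC.exists_lift hiC (LinearMap.snd R FA FC ∘ₗ (LinearMap.ker P).subtype) <| by
    ext z
    simp [← hgP]
  have hq' (z : LinearMap.ker P) : iC (q z) = (z : FA × FC).2 := congr($hq z)
  refine ⟨ModuleCat.of R (LinearMap.ker P), j, q, ⟨ModuleCat.of R (FA × FC),
    (LinearMap.ker P).subtype, P, Module.Free.prod R FA FC, Submodule.injective_subtype _,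
    LinearMap.exact_subtype_ker_map P, hPsurj⟩, fun w w' h => hiA congr(($h : FA × FC).1), ?_, ?_⟩
  · intro z
    rw [← hiC.eq_iff, hq', map_zero]
    constructor
    · intro h2
      obtain ⟨w, hw⟩ : (z : FA × FC).1 ∈ LinearMap.range iA := by
        have hfz : f (pA (z : FA × FC).1) = 0 :=
          (by rw [hP, h2, map_zero, add_zero] : f (pA (z : FA × FC).1) = P z).trans z.2
        rwa [← hexA.linearMap_ker_eq, LinearMap.mem_ker, ← hf.eq_iff, map_zero]
      exact ⟨w, Subtype.ext (Prod.ext hw h2.symm)⟩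
    · rintro ⟨w, rfl⟩
      rfl
  · intro w
    obtain ⟨a, ha⟩ : l (iC w) ∈ LinearMap.range f := by
      rw [← hfg.linearMap_ker_eq, LinearMap.mem_ker, hl', hexC.apply_apply_eq_zero]
    obtain ⟨x, rfl⟩ := hpA a
    have hz : ((-x, iC w) : FA × FC) ∈ LinearMap.ker P := by
      rw [LinearMap.mem_ker, hP, map_neg, map_neg, ha, neg_add_cancel]
    exact ⟨⟨_, hz⟩, hiC (hq' _)⟩

variable [IsLocalRing R]

open TensorProduct in
theorem exists_isSyzygyOf (L : ModuleCat.{u} R) [Module.Finite R L] :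
    ∃ Z : ModuleCat.{u} R, IsSyzygyOf R Z L := by
  have := Module.Free.of_divisionRing (IsLocalRing.ResidueField R)
    (IsLocalRing.ResidueField R ⊗[R] L)
  let b := Module.Free.chooseBasis (IsLocalRing.ResidueField R)
    (IsLocalRing.ResidueField R ⊗[R] L)
  choose v hv using fun i => TensorProduct.mk_surjective R L _
    IsLocalRing.residue_surjective (b i)
  let p := Fintype.linearCombination R v
  have hp : Function.Surjective p := by
    rw [← span_range_eq_top_iff_surjective_fintypeLinearCombination]
    exact IsLocalRing.span_eq_top_of_tmul_eq_basis v b hv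
  refine ⟨ModuleCat.of R (LinearMap.ker p), ModuleCat.of R (_ → R), (LinearMap.ker p).subtype, p,
    Module.Free.pi _ _, Module.Finite.pi,
    Submodule.injective_subtype _, LinearMap.exact_subtype_ker_map p, hp, ?_⟩
  rw [Submodule.range_subtype]
  refine IsLocalRing.ker_linearCombination_le_maximalIdeal_smul_top ?_
  simpa only [← TensorProduct.mk_apply, hv] using b.linearIndependent

theorem IsSyzygyOf.isFreeCoverKernel {X L : ModuleCat.{u} R}
    (h : IsSyzygyOf R X L) : IsFreeCoverKernel R X L :=
  let ⟨F, i, p, hF, _, hi, hip, hp, _⟩ := h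
  ⟨F, i, p, hF, hi, hip, hp⟩

theorem IsSyzygyOf.isSummand {K L ΩK X : ModuleCat.{u} R}
    (hK : IsSyzygyOf R ΩK K) (hKL : IsSummand R K L) (hX : IsFreeCoverKernel R X L) :
    IsSummand R ΩK X := by
  obtain ⟨FK, iK, pK, hFK, hFKfin, hiK, hexK, hpK, hmin⟩ := hK
  obtain ⟨FL, iL, pL, hFL, hiL, hexL, hpL⟩ := hX
  obtain ⟨s, r, hrs⟩ := hKL
  obtain ⟨σ, hσ⟩ := Module.projective_lifting_property pL (s ∘ₗ pK) hpL
  obtain ⟨φ, hφ⟩ := Module.projective_lifting_property pK (r ∘ₗ pL) hpK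
  have hψ : pK ∘ₗ (φ ∘ₗ σ) = pK := by
    rw [← LinearMap.comp_assoc, hφ, LinearMap.comp_assoc, hσ, ← LinearMap.comp_assoc, hrs,
      LinearMap.id_comp]
  -- `φ ∘ σ` lifts the identity of `K`, so minimality of `FK` makes it an automorphism.
  have hψbij : Function.Bijective (φ ∘ₗ σ) :=
    IsLocalRing.bijective_of_forall_sub_mem_maximalIdeal_smul_top _ fun x => hmin <| by
      rw [← hexK.linearMap_ker_eq, LinearMap.mem_ker, map_sub, ← LinearMap.comp_apply, hψ,
        sub_self]
  obtain ⟨u, hu⟩ := hexL.exists_lift hiL (σ ∘ₗ iK) <| by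
    rw [← LinearMap.comp_assoc, hσ, LinearMap.comp_assoc, hexK.linearMap_comp_eq_zero,
      LinearMap.comp_zero]
  obtain ⟨v, hv⟩ := hexK.exists_lift hiK (φ ∘ₗ iL) <| by
    rw [← LinearMap.comp_assoc, hφ, LinearMap.comp_assoc, hexL.linearMap_comp_eq_zero,
      LinearMap.comp_zero]
  have hθ : iK ∘ₗ (v ∘ₗ u) = (φ ∘ₗ σ) ∘ₗ iK := by
    rw [← LinearMap.comp_assoc, hv, LinearMap.comp_assoc, hu, LinearMap.comp_assoc]
  let θ := LinearEquiv.ofBijective (v ∘ₗ u) (hexK.bijective_of_comp_eq_comp hiK hψbij hψ hθ)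
  refine ⟨u, θ.symm.toLinearMap ∘ₗ v, LinearMap.ext fun x => ?_⟩
  exact θ.symm_apply_apply x

theorem isExtClosed_setOf_forall_isSyzygyOf_mem {S : Set (ModuleCat.{u} R)}
    (hS : IsExtClosed R S) :
    IsExtClosed R {L | Module.Finite R L ∧ ∀ Z, IsSyzygyOf R Z L → Z ∈ S} := by
  refine ⟨?_, ?_⟩
  · rintro L K ⟨hLfin, hL⟩ ⟨s, r, hrs⟩
    obtain ⟨W, hW⟩ := exists_isSyzygyOf L
    refine ⟨Module.Finite.of_surjective r fun k => ⟨s k, congr($hrs k)⟩, fun Z hZ => ?_⟩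
    exact hS.1 W Z (hL W hW) (hZ.isSummand ⟨s, r, hrs⟩ hW.isFreeCoverKernel)
  · rintro A B C f g hf hfg hg ⟨hAfin, hA⟩ ⟨hCfin, hC⟩
    obtain ⟨ZA, hZA⟩ := exists_isSyzygyOf A
    obtain ⟨ZC, hZC⟩ := exists_isSyzygyOf C
    obtain ⟨X, j, q, hX, hj, hjq, hq⟩ :=
      IsFreeCoverKernel.horseshoe hf hfg hg hZA.isFreeCoverKernel hZC.isFreeCoverKernel
    have hXS : X ∈ S := hS.2 ZA X ZC j q hj hjq hq (hA ZA hZA) (hC ZC hZC)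
    exact ⟨Module.Finite.of_exact hfg hg,
      fun Z hZ => hS.1 X Z hXS (hZ.isSummand (IsSummand.refl B) hX)⟩

end

theorem syzygy_mem_extClosure_general {R : Type u} [CommRing R]
    [IsLocalRing R]
    (M N ΩM ΩN : ModuleCat.{u} R)
    (hMfin : Module.Finite R M)
    (hΩM : IsSyzygyOf R ΩM M) (hΩN : IsSyzygyOf R ΩN N)
    (h : N ∈ extClosure R {M}) :
    ΩN ∈ extClosure R {ΩM} := by
  have hCl := isExtClosed_extClosure {ΩM}
  have hM : M ∈ {L : ModuleCat.{u} R |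
      Module.Finite R L ∧ ∀ Z, IsSyzygyOf R Z L → Z ∈ extClosure R {ΩM}} :=
    ⟨hMfin, fun Z hZ => hCl.1 ΩM Z (subset_extClosure {ΩM} rfl)
      (hZ.isSummand (IsSummand.refl M) hΩM.isFreeCoverKernel)⟩
  exact (extClosure_subset (Set.singleton_subset_iff.2 hM)
    (isExtClosed_setOf_forall_isSyzygyOf_mem hCl) h).2 ΩN hΩN

/-- Lemma 2.12(1): over a noetherian local ring, if `N` belongs to the extension
closure of `M` in `mod R`, then the first syzygy `Ω N` belongs to the extension
closure of `Ω M`. -/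
theorem syzygy_mem_extClosure {R : Type u} [CommRing R] [IsNoetherianRing R]
    [IsLocalRing R]
    (M N ΩM ΩN : ModuleCat.{u} R)
    (hMfin : Module.Finite R M) (hNfin : Module.Finite R N)
    (hΩM : IsSyzygyOf R ΩM M) (hΩN : IsSyzygyOf R ΩN N)
    (h : N ∈ extClosure R {M}) :
    ΩN ∈ extClosure R {ΩM} :=
  syzygy_mem_extClosure_general M N ΩM ΩN hMfin hΩM hΩN h
end

section
/- Let R = k[[x,y,z]]/(xy), let p ≥ 1, let h be a unit of R, and consider the 4×4 matrix D = (y, -z^p, 0, h; 0, x, 0, 0; 0, 0, y, -z; 0, 0, 0, x) over R. Then the cokernel of D (as a map R^4 → R^4) is isomorphic to I_(p+1) ⊕ R, where I_(p+1) = (x, z^(p+1))R. -/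
open CategoryTheory MvPowerSeries

universe u

/-- The two-dimensional `A_∞` hypersurface singularity `k[[x,y,z]]/(xy)`. -/
abbrev AInf (k : Type u) [Field k] : Type u :=
  MvPowerSeries (Fin 3) k ⧸
    Ideal.span {(X 0 : MvPowerSeries (Fin 3) k) * (X 1 : MvPowerSeries (Fin 3) k)}

/-- The projection `k[[x,y,z]] → k[[x,y,z]]/(xy)`. -/
noncomputable abbrev aInfMk (k : Type u) [Field k] :
    MvPowerSeries (Fin 3) k →+* AInf k :=
  Ideal.Quotient.mk _

/-- The images of `x`, `y`, `z` in `R = k[[x,y,z]]/(xy)`. -/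
noncomputable abbrev xA (k : Type u) [Field k] : AInf k := aInfMk k (X 0)
noncomputable abbrev yA (k : Type u) [Field k] : AInf k := aInfMk k (X 1)
noncomputable abbrev zA (k : Type u) [Field k] : AInf k := aInfMk k (X 2)

/-- The ideal `I_l = (x, z^l)R` for `l ≥ 1`. -/
noncomputable abbrev IIdeal (k : Type u) [Field k] (l : ℕ) : Ideal (AInf k) :=
  Ideal.span {xA k, zA k ^ l}

/-- The ideal `J_l = (y, z^l)R` for `l ≥ 1`. -/
noncomputable abbrev JIdeal (k : Type u) [Field k] (l : ℕ) : Ideal (AInf k) :=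
  Ideal.span {yA k, zA k ^ l}

/-- The module `I_l`, with the convention `I_0 = R`. -/
noncomputable def IMod (k : Type u) [Field k] (l : ℕ) : ModuleCat.{u} (AInf k) :=
  if l = 0 then ModuleCat.of (AInf k) (AInf k) else ModuleCat.of (AInf k) (IIdeal k l)

/-!
The isomorphism is induced by an explicit surjection `R⁴ → I_{p+1} × R` whose kernel is the
column span of the matrix. In the cokernel the last column `(h, 0, -z, x)` solves
`e₀ = h⁻¹ (z e₂ - x e₃)`; what is left is a free generator `e₃` together with the relations
`y e₂ = 0` and `x (e₁ + h⁻¹ zᵖ e₃) = h⁻¹ zᵖ⁺¹ e₂`, which present `I_{p+1}` via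
`h⁻¹ e₂ ↦ x`, `e₁ + h⁻¹ zᵖ e₃ ↦ zᵖ⁺¹`.
Exactness rests on the syzygies of `(x, zˡ)` in `k[[x,y,z]]/(xy)`: `a x + b zˡ = 0` forces
`a ∈ (y, zˡ)` and `b ∈ (x)`, because `x, zˡ` is a regular sequence in `k[[x,y,z]]`.
-/

namespace MvPowerSeries

variable {σ R : Type*} [CommRing R]

theorem X_pow_dvd_of_X_mul_eq {i j : σ} (hij : i ≠ j) {n : ℕ} {f g : MvPowerSeries σ R}
    (hfg : X i * f = X j ^ n * g) : X j ^ n ∣ f := by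
  classical
  rw [X_pow_dvd_iff]
  intro m hm
  have hm' : (Finsupp.single i 1 + m : σ →₀ ℕ) j < n := by
    simpa [Finsupp.single_apply, hij] using hm
  calc coeff m f = coeff (Finsupp.single i 1 + m) (X i * f) := by
        rw [X, coeff_add_monomial_mul, one_mul]
    _ = 0 := by rw [hfg]; exact X_pow_dvd_iff.mp (dvd_mul_right _ _) _ hm'

theorem exists_eq_X_pow_mul_of_X_mul_eq {i j : σ} (hij : i ≠ j) {n : ℕ}
    {f g : MvPowerSeries σ R} (hfg : X i * f = X j ^ n * g) :
    ∃ d, f = X j ^ n * d ∧ g = X i * d := by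
  obtain ⟨d, rfl⟩ := X_pow_dvd_of_X_mul_eq hij hfg
  refine ⟨d, rfl, ?_⟩
  have hreg : (X j : MvPowerSeries σ R) ^ n ∈ nonZeroDivisors (MvPowerSeries σ R) :=
    pow_mem X_mem_nonzeroDivisors n
  rw [← mul_cancel_left_mem_nonZeroDivisors hreg, ← hfg, mul_left_comm]

end MvPowerSeries

namespace AInf

variable (k : Type u) [Field k]

theorem xA_mul_yA : xA k * yA k = 0 :=
  Ideal.Quotient.eq_zero_iff_mem.mpr (Ideal.subset_span rfl)

theorem exists_of_mul_xA_add_mul_zA_pow_eq_zero (l : ℕ) {a b : AInf k}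
    (hab : a * xA k + b * zA k ^ l = 0) :
    ∃ c d : AInf k, a = c * yA k + d * zA k ^ l ∧ b = -(d * xA k) := by
  obtain ⟨A, rfl⟩ := Ideal.Quotient.mk_surjective a
  obtain ⟨B, rfl⟩ := Ideal.Quotient.mk_surjective b
  obtain ⟨C, hC⟩ : X 0 * X 1 ∣ A * X 0 + B * X 2 ^ l := by
    rw [← Ideal.mem_span_singleton, ← Ideal.Quotient.eq_zero_iff_mem]
    simpa only [map_add, map_mul, map_pow] using hab
  obtain ⟨D, hA, hB⟩ := MvPowerSeries.exists_eq_X_pow_mul_of_X_mul_eq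
    (by decide : (0 : Fin 3) ≠ 2) (f := A - X 1 * C) (g := -B) (n := l)
    (by linear_combination hC)
  refine ⟨aInfMk k C, aInfMk k D, ?_, ?_⟩
  · rw [sub_eq_iff_eq_add.mp hA]
    simp only [map_add, map_mul, map_pow]
    ring
  · rw [neg_eq_iff_eq_neg.mp hB, map_neg, map_mul]
    ring

section Presentation

open Matrix

variable (p : ℕ)

noncomputable def presentationMatrix (h : AInf k) : Matrix (Fin 4) (Fin 4) (AInf k) :=
  !![yA k, -(zA k ^ p), 0, h;
     0, xA k, 0, 0;
     0, 0, yA k, -(zA k);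
     0, 0, 0, xA k]

theorem presentationMatrix_mulVec (h : AInf k) (v : Fin 4 → AInf k) :
    presentationMatrix k p h *ᵥ v =
      ![yA k * v 0 - zA k ^ p * v 1 + h * v 3, xA k * v 1,
        yA k * v 2 - zA k * v 3, xA k * v 3] := by
  ext i
  fin_cases i <;>
    simp only [presentationMatrix, mulVec, dotProduct, Fin.sum_univ_four, of_apply, cons_val',
      cons_val_fin_one, cons_val_zero, cons_val_one, cons_val, Fin.zero_eta, Fin.mk_one,
      Fin.reduceFinMk] <;>
    ring

variable (u : (AInf k)ˣ)

noncomputable def presentationMap :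
    (Fin 4 → AInf k) →ₗ[AInf k] IIdeal k (p + 1) × AInf k where
  toFun w :=
    (⟨xA k * zA k * w 0 + zA k ^ (p + 1) * w 1 + u * xA k * w 2,
      Ideal.mem_span_pair.mpr ⟨zA k * w 0 + u * w 2, w 1, by ring⟩⟩,
     w 3 - ↑u⁻¹ * xA k * w 0 - ↑u⁻¹ * zA k ^ p * w 1)
  map_add' v w := by ext <;> simp only [Pi.add_apply, Prod.fst_add, Prod.snd_add,
    Submodule.coe_add] <;> ring
  map_smul' c w := by ext <;> simp only [Pi.smul_apply, smul_eq_mul, Prod.smul_fst,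
    Prod.smul_snd, Submodule.coe_smul, RingHom.id_apply] <;> ring

@[simp]
theorem coe_presentationMap_fst (w : Fin 4 → AInf k) :
    ((presentationMap k p u w).1 : AInf k) =
      xA k * zA k * w 0 + zA k ^ (p + 1) * w 1 + u * xA k * w 2 :=
  rfl

@[simp]
theorem presentationMap_snd (w : Fin 4 → AInf k) :
    (presentationMap k p u w).2 = w 3 - ↑u⁻¹ * xA k * w 0 - ↑u⁻¹ * zA k ^ p * w 1 :=
  rfl

theorem presentationMap_surjective : Function.Surjective (presentationMap k p u) := by
  rintro ⟨⟨i, hi⟩, r⟩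
  obtain ⟨a, b, rfl⟩ := Ideal.mem_span_pair.mp hi
  refine ⟨![0, b, ↑u⁻¹ * a, r + ↑u⁻¹ * zA k ^ p * b], ?_⟩
  ext
  · simp only [coe_presentationMap_fst, cons_val_zero, cons_val_one, cons_val]
    linear_combination (a * xA k) * u.mul_inv
  · simp

theorem presentationMap_mulVec (v : Fin 4 → AInf k) :
    presentationMap k p u (presentationMatrix k p u *ᵥ v) = 0 := by
  have hxy := xA_mul_yA k
  ext
  · simp only [presentationMatrix_mulVec, coe_presentationMap_fst, cons_val_zero, cons_val_one,
      cons_val, Prod.fst_zero, ZeroMemClass.coe_zero]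
    linear_combination (zA k * v 0 + u * v 2) * hxy
  · simp only [presentationMatrix_mulVec, presentationMap_snd, cons_val_zero, cons_val_one,
      cons_val, Prod.snd_zero]
    linear_combination (-(↑u⁻¹ * v 0)) * hxy - (xA k * v 3) * u.inv_mul

theorem exists_mulVec_eq_of_presentationMap_eq_zero {v : Fin 4 → AInf k}
    (hv : presentationMap k p u v = 0) : ∃ w, presentationMatrix k p u *ᵥ w = v := by
  have h1 : xA k * zA k * v 0 + zA k ^ (p + 1) * v 1 + u * xA k * v 2 = 0 :=
    congrArg (fun q => (q.1 : AInf k)) hv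
  have h2 : v 3 - ↑u⁻¹ * xA k * v 0 - ↑u⁻¹ * zA k ^ p * v 1 = 0 := congrArg Prod.snd hv
  obtain ⟨c, d, hc, hd⟩ := exists_of_mul_xA_add_mul_zA_pow_eq_zero k (p + 1)
    (a := zA k * v 0 + u * v 2) (b := v 1) (by linear_combination h1)
  refine ⟨![0, -d, ↑u⁻¹ * c, ↑u⁻¹ * (v 0 - d * zA k ^ p)], ?_⟩
  rw [presentationMatrix_mulVec]
  ext i
  fin_cases i <;>
    simp only [Fin.zero_eta, Fin.mk_one, Fin.reduceFinMk, cons_val_zero, cons_val_one, cons_val]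
  · linear_combination (v 0 - d * zA k ^ p) * u.mul_inv
  · linear_combination -hd
  · linear_combination (-↑u⁻¹) * hc + v 2 * u.mul_inv
  · linear_combination -h2 - ↑u⁻¹ * zA k ^ p * hd

theorem range_toLin'_presentationMatrix :
    LinearMap.range (Matrix.toLin' (presentationMatrix k p u)) =
      LinearMap.ker (presentationMap k p u) := by
  ext v
  constructor
  · rintro ⟨w, rfl⟩
    exact presentationMap_mulVec k p u w
  · exact exists_mulVec_eq_of_presentationMap_eq_zero k p u

end Presentation

end AInf

theorem aInf_cokernel_iso_general (k : Type u) [Field k] (p : ℕ)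
    (h : AInf k) (hh : IsUnit h) :
    Nonempty (((Fin 4 → AInf k) ⧸
        LinearMap.range (Matrix.toLin'
          (!![yA k, -(zA k ^ p), 0, h;
              0, xA k, 0, 0;
              0, 0, yA k, -(zA k);
              0, 0, 0, xA k]))) ≃ₗ[AInf k]
      (IIdeal k (p + 1) × AInf k)) := by
  obtain ⟨u, rfl⟩ := hh
  exact ⟨(Submodule.quotEquivOfEq _ _ (AInf.range_toLin'_presentationMatrix k p u)).trans
    ((AInf.presentationMap k p u).quotKerEquivOfSurjective
      (AInf.presentationMap_surjective k p u))⟩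

/-- Claim 4.3(2)(c): over `R = k[[x,y,z]]/(xy)`, for `p ≥ 1` and a unit `h` of `R`,
the cokernel of the matrix `(y, -z^p, 0, h; 0, x, 0, 0; 0, 0, y, -z; 0, 0, 0, x)`
is isomorphic to `I_(p+1) ⊕ R`. -/
theorem aInf_cokernel_iso (k : Type u) [Field k] (p : ℕ) (hp : 1 ≤ p)
    (h : AInf k) (hh : IsUnit h) :
    Nonempty (((Fin 4 → AInf k) ⧸
        LinearMap.range (Matrix.toLin'
          (!![yA k, -(zA k ^ p), 0, h;
              0, xA k, 0, 0;
              0, 0, yA k, -(zA k);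
              0, 0, 0, xA k]))) ≃ₗ[AInf k]
      (IIdeal k (p + 1) × AInf k)) :=
  aInf_cokernel_iso_general k p h hh
end
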